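/- arXiv:2411.11320 — 4 statements merged into one kernel-verified Lean document; each statement's English description precedes it below -/
import Mathlib

section
/- For all real w₁, w₂ and constants a > 0: |a·(w₁ - w₂) + (w₁ - w₂)·w₁·w₂| / ((a + w₁²)(a + w₂²)) ≤ (1/a)·|w₁ - w₂|. -/
theorem key_lipschitz_inequality (a w₁ w₂ : ℝ) (ha : 0 < a) :
    |a * (w₁ - w₂) + (w₁ - w₂) * w₁ * w₂| / ((a + w₁ ^ 2) * (a + w₂ ^ 2))
      ≤ (1 / a) * |w₁ - w₂| := by
  have hD : 0 < (a + w₁ ^ 2) * (a + w₂ ^ 2) := by positivity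
  rw [div_le_iff₀ hD]
  have h1 : a * (w₁ - w₂) + (w₁ - w₂) * w₁ * w₂ = (w₁ - w₂) * (a + w₁ * w₂) := by ring
  rw [h1, abs_mul]
  have h2 : |a + w₁ * w₂| ≤ (a + w₁ ^ 2) * (a + w₂ ^ 2) / a := by
    have key : a * ((a + w₁ ^ 2) * (a + w₂ ^ 2) / a) = (a + w₁ ^ 2) * (a + w₂ ^ 2) := by
      field_simp
    rw [abs_le]
    constructor <;> nlinarith [sq_nonneg (w₁ + w₂), sq_nonneg (w₁ - w₂), sq_nonneg (w₁*w₂)]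
  calc |w₁ - w₂| * |a + w₁ * w₂| ≤ |w₁ - w₂| * ((a + w₁ ^ 2) * (a + w₂ ^ 2) / a) :=
        mul_le_mul_of_nonneg_left h2 (abs_nonneg _)
    _ = 1 / a * |w₁ - w₂| * ((a + w₁ ^ 2) * (a + w₂ ^ 2)) := by field_simp
end

section
/- Let F : ℝⁿ → ℝ be F(x) = Σᵢ (1+νᵢ)·log(1 + (cᵢᵀx - yᵢ)²/(νᵢ σᵢ²)) where νᵢ, σᵢ > 0, cᵢ ∈ ℝⁿ, yᵢ ∈ ℝ. Then the gradient of F is Lipschitz continuous with constant L = 2·Σᵢ ((νᵢ+1)/(νᵢ σᵢ²))·‖cᵢ‖². -/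
open RealInnerProductSpace

/-!
`F` is a sum of ridge functions `x ↦ φᵢ ⟪cᵢ, x⟫`, so `∇F x = ∑ φᵢ' ⟪cᵢ, x⟫ • cᵢ`, and the gradient is
`∑ Lᵢ ‖cᵢ‖²`-Lipschitz as soon as each `φᵢ'` is `Lᵢ`-Lipschitz. For the Student-t terms
`φᵢ' t = 2 (1 + νᵢ) s / (aᵢ + s²)` with `s = t - yᵢ`, `aᵢ = νᵢ σᵢ²`, and `s ↦ s / (a + s²)` is
`1/a`-Lipschitz.
-/

lemma abs_div_add_sq_sub_div_add_sq_le {a : ℝ} (ha : 0 < a) (s t : ℝ) :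
    |s / (a + s ^ 2) - t / (a + t ^ 2)| ≤ |s - t| / a := by
  have hs : 0 < a + s ^ 2 := by positivity
  have ht : 0 < a + t ^ 2 := by positivity
  have hdiff : s / (a + s ^ 2) - t / (a + t ^ 2)
      = (s - t) * (a - s * t) / ((a + s ^ 2) * (a + t ^ 2)) := by
    field_simp; ring
  have hnum : a * |a - s * t| ≤ (a + s ^ 2) * (a + t ^ 2) := by
    rcases abs_cases (a - s * t) with ⟨h, _⟩ | ⟨h, _⟩ <;> rw [h] <;>
      nlinarith [sq_nonneg (s - t), sq_nonneg (s + t), sq_nonneg (s * t)]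
  rw [hdiff, abs_div, abs_mul, abs_of_pos (mul_pos hs ht), div_le_div_iff₀ (mul_pos hs ht) ha,
    mul_assoc, mul_comm |a - s * t|]
  exact mul_le_mul_of_nonneg_left (by linarith) (abs_nonneg _)

lemma hasDerivAt_log_one_add_sq_div {a : ℝ} (ha : 0 < a) (t : ℝ) :
    HasDerivAt (fun t => Real.log (1 + t ^ 2 / a)) (2 * (t / (a + t ^ 2))) t := by
  have hinner : HasDerivAt (fun t : ℝ => 1 + t ^ 2 / a) (2 * t / a) t := by
    simpa [mul_comm] using ((hasDerivAt_pow 2 t).div_const a).const_add 1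
  refine (hinner.log (by positivity)).congr_deriv ?_
  field_simp

section RidgeSum

variable {E ι : Type*} [NormedAddCommGroup E] [InnerProductSpace ℝ E] [CompleteSpace E]

theorem hasGradientAt_sum_comp_inner (s : Finset ι) (c : ι → E) {φ φ' : ι → ℝ → ℝ}
    (hφ : ∀ i t, HasDerivAt (φ i) (φ' i t) t) (x : E) :
    HasGradientAt (fun x => ∑ i ∈ s, φ i ⟪c i, x⟫) (∑ i ∈ s, φ' i ⟪c i, x⟫ • c i) x := by
  rw [hasGradientAt_iff_hasFDerivAt, map_sum]
  refine HasFDerivAt.fun_sum fun i _ => ?_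
  rw [map_smul]
  exact (hφ i _).comp_hasFDerivAt x (innerSL ℝ (c i)).hasFDerivAt

theorem norm_gradient_sum_comp_inner_sub_le (s : Finset ι) (c : ι → E) {φ φ' : ι → ℝ → ℝ}
    {L : ι → ℝ} (hφ : ∀ i t, HasDerivAt (φ i) (φ' i t) t)
    (hφ' : ∀ i t₁ t₂, |φ' i t₁ - φ' i t₂| ≤ L i * |t₁ - t₂|) (x₁ x₂ : E) :
    ‖gradient (fun x => ∑ i ∈ s, φ i ⟪c i, x⟫) x₁ - gradient (fun x => ∑ i ∈ s, φ i ⟪c i, x⟫) x₂‖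
      ≤ (∑ i ∈ s, L i * ‖c i‖ ^ 2) * ‖x₁ - x₂‖ := by
  rw [(hasGradientAt_sum_comp_inner s c hφ x₁).gradient,
    (hasGradientAt_sum_comp_inner s c hφ x₂).gradient, ← Finset.sum_sub_distrib, Finset.sum_mul]
  refine (norm_sum_le _ _).trans (Finset.sum_le_sum fun i _ => ?_)
  have hL : 0 ≤ L i := by
    simpa using (abs_nonneg _).trans (hφ' i 1 0)
  have hinner : |⟪c i, x₁⟫ - ⟪c i, x₂⟫| ≤ ‖c i‖ * ‖x₁ - x₂‖ := by
    rw [← inner_sub_right]; exact abs_real_inner_le_norm _ _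
  calc ‖φ' i ⟪c i, x₁⟫ • c i - φ' i ⟪c i, x₂⟫ • c i‖
      = |φ' i ⟪c i, x₁⟫ - φ' i ⟪c i, x₂⟫| * ‖c i‖ := by
        rw [← sub_smul, norm_smul, Real.norm_eq_abs]
    _ ≤ L i * (‖c i‖ * ‖x₁ - x₂‖) * ‖c i‖ := by
        gcongr
        exact (hφ' i _ _).trans (mul_le_mul_of_nonneg_left hinner hL)
    _ = L i * ‖c i‖ ^ 2 * ‖x₁ - x₂‖ := by ring

end RidgeSum

theorem studentT_gradient_lipschitz (n m : ℕ) (ν σ : Fin m → ℝ)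
    (hν : ∀ i, 0 < ν i) (hσ : ∀ i, 0 < σ i)
    (c : Fin m → EuclideanSpace ℝ (Fin n)) (y : Fin m → ℝ)
    (F : EuclideanSpace ℝ (Fin n) → ℝ)
    (hF : F = fun x => ∑ i, (1 + ν i) * Real.log (1 + (⟪c i, x⟫ - y i) ^ 2 / (ν i * σ i ^ 2))) :
    ∀ x₁ x₂ : EuclideanSpace ℝ (Fin n),
      ‖gradient F x₁ - gradient F x₂‖
        ≤ (2 * ∑ i, ((ν i + 1) / (ν i * σ i ^ 2)) * ‖c i‖ ^ 2) * ‖x₁ - x₂‖ := by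
  intro x₁ x₂
  have ha : ∀ i, 0 < ν i * σ i ^ 2 := fun i => mul_pos (hν i) (pow_pos (hσ i) 2)
  have hderiv : ∀ i t, HasDerivAt (fun t => (1 + ν i) * Real.log (1 + (t - y i) ^ 2 / (ν i * σ i ^ 2)))
      ((1 + ν i) * (2 * ((t - y i) / (ν i * σ i ^ 2 + (t - y i) ^ 2)))) t := fun i t =>
    (((hasDerivAt_log_one_add_sq_div (ha i) (t - y i)).comp t
      ((hasDerivAt_id t).sub_const (y i))).const_mul (1 + ν i)).congr_deriv (by simp)
  have hlip : ∀ i t₁ t₂, |(1 + ν i) * (2 * ((t₁ - y i) / (ν i * σ i ^ 2 + (t₁ - y i) ^ 2)))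
      - (1 + ν i) * (2 * ((t₂ - y i) / (ν i * σ i ^ 2 + (t₂ - y i) ^ 2)))|
      ≤ 2 * ((ν i + 1) / (ν i * σ i ^ 2)) * |t₁ - t₂| := fun i t₁ t₂ => by
    have h := abs_div_add_sq_sub_div_add_sq_le (ha i) (t₁ - y i) (t₂ - y i)
    rw [sub_sub_sub_cancel_right] at h
    rw [← mul_sub, ← mul_sub, abs_mul, abs_mul, abs_of_pos (by linarith [hν i]), abs_two]
    calc (1 + ν i) * (2 * |_|) ≤ (1 + ν i) * (2 * (|t₁ - t₂| / (ν i * σ i ^ 2))) := by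
          gcongr; linarith [hν i]
      _ = _ := by ring
  subst hF
  simpa only [Finset.mul_sum, Finset.sum_mul, mul_assoc] using
    norm_gradient_sum_comp_inner_sub_le Finset.univ c hderiv hlip x₁ x₂
end

section
/- For any real x, t, the inequality (1+ν)·log(1 + (x-y)²/(νσ²)) ≤ (1+ν)·log(1 + (t-y)²/(νσ²)) + m·((x-y)² - (t-y)²) holds with m = (1+ν)/(νσ² + (t-y)²), and the two sides together with their derivatives in x agree at x = t. -/
/-
Concavity of `log` gives `log a ≤ log b + (a - b) / b`. For `a = 1 + (x - y)² / c` and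
`b = 1 + (t - y)² / c` with `c = ν σ²`, the correction `(a - b) / b` equals
`((x - y)² - (t - y)²) / (c + (t - y)²)`, so it is linear in `(x - y)²`; scaling by `1 + ν`
gives the surrogate, and at `x = t` both sides have slope `2 (1 + ν) (t - y) / (c + (t - y)²)`.
-/

namespace Real

lemma log_le_log_add_sub_div {a b : ℝ} (ha : 0 < a) (hb : 0 < b) :
    log a ≤ log b + (a - b) / b := by
  have h := log_le_sub_one_of_pos (div_pos ha hb)
  rw [log_div ha.ne' hb.ne', div_sub_one hb.ne'] at h
  linarith

lemma log_one_add_div_le {c r s : ℝ} (hc : 0 < c) (hr : 0 ≤ r) (hs : 0 ≤ s) :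
    log (1 + r / c) ≤ log (1 + s / c) + (r - s) / (c + s) := by
  have h := log_le_log_add_sub_div (a := 1 + r / c) (b := 1 + s / c)
    (by positivity) (by positivity)
  have hquot : (1 + r / c - (1 + s / c)) / (1 + s / c) = (r - s) / (c + s) := by
    field_simp
    ring
  rwa [hquot] at h

lemma hasDerivAt_log_one_add_sq_div {c : ℝ} (hc : 0 < c) (y x : ℝ) :
    HasDerivAt (fun x => log (1 + (x - y) ^ 2 / c)) (2 * (x - y) / (c + (x - y) ^ 2)) x := by
  have hsq : HasDerivAt (fun x => 1 + (x - y) ^ 2 / c) (2 * (x - y) / c) x := by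
    simpa using ((((hasDerivAt_id x).sub_const y).pow 2).div_const c).const_add 1
  convert hsq.log (by positivity) using 1
  field_simp

end Real

lemma hasDerivAt_const_add_mul_sq_sub (a m s y x : ℝ) :
    HasDerivAt (fun x => a + m * ((x - y) ^ 2 - s)) (m * (2 * (x - y))) x := by
  simpa using (((((hasDerivAt_id x).sub_const y).pow 2).sub_const s).const_mul m).const_add a

theorem log_surrogate_majorize_and_tangent (y ν σ t : ℝ) (hν : 0 < ν) (hσ : 0 < σ) :
    (∀ x : ℝ,
      (1 + ν) * Real.log (1 + (x - y) ^ 2 / (ν * σ ^ 2))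
        ≤ (1 + ν) * Real.log (1 + (t - y) ^ 2 / (ν * σ ^ 2))
          + ((1 + ν) / (ν * σ ^ 2 + (t - y) ^ 2)) * ((x - y) ^ 2 - (t - y) ^ 2)) ∧
    (1 + ν) * Real.log (1 + (t - y) ^ 2 / (ν * σ ^ 2))
        = (1 + ν) * Real.log (1 + (t - y) ^ 2 / (ν * σ ^ 2))
          + ((1 + ν) / (ν * σ ^ 2 + (t - y) ^ 2)) * ((t - y) ^ 2 - (t - y) ^ 2) ∧
    deriv (fun x : ℝ => (1 + ν) * Real.log (1 + (x - y) ^ 2 / (ν * σ ^ 2))) t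
        = deriv (fun x : ℝ =>
            (1 + ν) * Real.log (1 + (t - y) ^ 2 / (ν * σ ^ 2))
              + ((1 + ν) / (ν * σ ^ 2 + (t - y) ^ 2)) * ((x - y) ^ 2 - (t - y) ^ 2)) t := by
  have hc : 0 < ν * σ ^ 2 := by positivity
  refine ⟨fun x => ?_, by ring, ?_⟩
  · calc (1 + ν) * Real.log (1 + (x - y) ^ 2 / (ν * σ ^ 2))
        ≤ (1 + ν) * (Real.log (1 + (t - y) ^ 2 / (ν * σ ^ 2))
            + ((x - y) ^ 2 - (t - y) ^ 2) / (ν * σ ^ 2 + (t - y) ^ 2)) :=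
          mul_le_mul_of_nonneg_left (Real.log_one_add_div_le hc (sq_nonneg _) (sq_nonneg _))
            (by linarith)
      _ = _ := by ring
  · rw [((Real.hasDerivAt_log_one_add_sq_div hc y t).const_mul (1 + ν)).deriv,
      (hasDerivAt_const_add_mul_sq_sub _ _ _ y t).deriv]
    ring
end

section
/- Let Q : ℝⁿ → ℝ be Q(x) = (x - x̂)ᵀP⁻¹(x - x̂) + Σᵢ (cᵢᵀx - yᵢ)²/rᵢ with P symmetric positive definite and rᵢ > 0. Then Q has a unique global minimizer x* = x̂ + K(y - Cx̂), where C is the matrix with rows cᵢᵀ, R = diag(r₁,…,r_m), and K = P Cᵀ (C P Cᵀ + R)⁻¹. -/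
/-!
At the Kalman update `x⋆ = x̂ + K (y - C x̂)` the gradient of the MAP objective vanishes: the matrix
identity `P⁻¹ K + Cᵀ R⁻¹ (C K - 1) = 0` holds because `C K = (S - R) S⁻¹` with `S = C P Cᵀ + R`.
A quadratic objective with vanishing gradient at `x⋆` exceeds its value there by its quadratic
part evaluated at `x - x⋆`, which is positive for `x ≠ x⋆` since `P⁻¹` is positive definite and
`R⁻¹` positive semidefinite.
-/

open Matrix

namespace Matrix

section CommRing

variable {α : Type*} [CommRing α] {n m : Type*} [Fintype n] [Fintype m]

theorem IsSymm.add_dotProduct_mulVec_add {A : Matrix n n α} (hA : A.IsSymm) (v d : n → α) :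
    (v + d) ⬝ᵥ A *ᵥ (v + d) = v ⬝ᵥ A *ᵥ v + 2 * (A *ᵥ v ⬝ᵥ d) + d ⬝ᵥ A *ᵥ d := by
  have hswap : v ⬝ᵥ A *ᵥ d = A *ᵥ v ⬝ᵥ d := by
    rw [dotProduct_mulVec, ← mulVec_transpose, hA.eq]
  simp only [mulVec_add, dotProduct_add, add_dotProduct, hswap, dotProduct_comm d (A *ᵥ v)]
  ring

theorem quadratic_objective_eq_of_stationary {A : Matrix n n α} {B : Matrix m m α}
    (hA : A.IsSymm) (hB : B.IsSymm) (C : Matrix m n α) (a : n → α) (y : m → α) {s : n → α}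
    (hs : A *ᵥ (s - a) + Cᵀ *ᵥ (B *ᵥ (C *ᵥ s - y)) = 0) (x : n → α) :
    (x - a) ⬝ᵥ A *ᵥ (x - a) + (C *ᵥ x - y) ⬝ᵥ B *ᵥ (C *ᵥ x - y)
      = (s - a) ⬝ᵥ A *ᵥ (s - a) + (C *ᵥ s - y) ⬝ᵥ B *ᵥ (C *ᵥ s - y)
        + ((x - s) ⬝ᵥ A *ᵥ (x - s) + C *ᵥ (x - s) ⬝ᵥ B *ᵥ C *ᵥ (x - s)) := by
  have hxa : x - a = (s - a) + (x - s) := by abel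
  have hCx : C *ᵥ x - y = (C *ᵥ s - y) + C *ᵥ (x - s) := by rw [mulVec_sub]; abel
  have hcross : A *ᵥ (s - a) ⬝ᵥ (x - s) + B *ᵥ (C *ᵥ s - y) ⬝ᵥ C *ᵥ (x - s) = 0 := by
    rw [dotProduct_mulVec, ← mulVec_transpose, ← add_dotProduct, hs, zero_dotProduct]
  rw [hxa, hCx, hA.add_dotProduct_mulVec_add, hB.add_dotProduct_mulVec_add]
  linear_combination 2 * hcross

end CommRing

section PosDef

variable {α : Type*} [CommRing α] [PartialOrder α] [IsOrderedRing α] [StarRing α] [TrivialStar α]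
  {n m : Type*} [Fintype n] [Fintype m]

theorem quadratic_objective_lt_of_stationary {A : Matrix n n α} {B : Matrix m m α}
    (hA : A.PosDef) (hB : B.PosSemidef) (C : Matrix m n α) (a : n → α) (y : m → α) {s : n → α}
    (hs : A *ᵥ (s - a) + Cᵀ *ᵥ (B *ᵥ (C *ᵥ s - y)) = 0) {x : n → α} (hx : x ≠ s) :
    (s - a) ⬝ᵥ A *ᵥ (s - a) + (C *ᵥ s - y) ⬝ᵥ B *ᵥ (C *ᵥ s - y)
      < (x - a) ⬝ᵥ A *ᵥ (x - a) + (C *ᵥ x - y) ⬝ᵥ B *ᵥ (C *ᵥ x - y) := by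
  rw [quadratic_objective_eq_of_stationary (isHermitian_iff_isSymm.mp hA.isHermitian)
    (isHermitian_iff_isSymm.mp hB.isHermitian) C a y hs x]
  have hApos := hA.dotProduct_mulVec_pos (sub_ne_zero.mpr hx)
  have hBnonneg := hB.dotProduct_mulVec_nonneg (C *ᵥ (x - s))
  rw [star_trivial] at hApos hBnonneg
  exact lt_add_of_pos_right _ (add_pos_of_pos_of_nonneg hApos hBnonneg)

end PosDef

section Diagonal

variable {K : Type*} [Field K] {m : Type*} [Fintype m] [DecidableEq m]

theorem inv_diagonal_of_ne_zero {r : m → K} (hr : ∀ i, r i ≠ 0) :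
    (diagonal r)⁻¹ = diagonal r⁻¹ := by
  refine inv_eq_left_inv ?_
  rw [diagonal_mul_diagonal, ← diagonal_one]
  exact congrArg diagonal (funext fun i => inv_mul_cancel₀ (hr i))

theorem dotProduct_diagonal_inv_mulVec (r v : m → K) :
    v ⬝ᵥ diagonal r⁻¹ *ᵥ v = ∑ i, v i ^ 2 / r i := by
  simp only [dotProduct, mulVec_diagonal, Pi.inv_apply]
  exact Finset.sum_congr rfl fun i _ => by ring

end Diagonal

end Matrix

section Kalman

variable {α : Type*} [CommRing α] {n m : Type*} [Fintype n] [Fintype m] [DecidableEq n]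
  [DecidableEq m]

noncomputable def kalmanGain (P : Matrix n n α) (C : Matrix m n α) (R : Matrix m m α) :
    Matrix n m α :=
  P * Cᵀ * (C * P * Cᵀ + R)⁻¹

noncomputable def kalmanUpdate (P : Matrix n n α) (C : Matrix m n α) (R : Matrix m m α)
    (xhat : n → α) (y : m → α) : n → α :=
  xhat + kalmanGain P C R *ᵥ (y - C *ᵥ xhat)

variable {P : Matrix n n α} {C : Matrix m n α} {R : Matrix m m α}

theorem inv_mul_kalmanGain_add_eq_zero (hP : IsUnit P.det) (hR : IsUnit R.det)
    (hS : IsUnit (C * P * Cᵀ + R).det) :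
    P⁻¹ * kalmanGain P C R + Cᵀ * R⁻¹ * (C * kalmanGain P C R - 1) = 0 := by
  have hPK : P⁻¹ * kalmanGain P C R = Cᵀ * (C * P * Cᵀ + R)⁻¹ := by
    rw [kalmanGain, ← Matrix.mul_assoc, ← Matrix.mul_assoc, nonsing_inv_mul _ hP, Matrix.one_mul]
  have hCK : C * kalmanGain P C R = (C * P * Cᵀ + R - R) * (C * P * Cᵀ + R)⁻¹ := by
    rw [add_sub_cancel_right, kalmanGain, ← Matrix.mul_assoc, ← Matrix.mul_assoc]
  rw [hPK, hCK, Matrix.sub_mul, mul_nonsing_inv _ hS, sub_sub_cancel_left, Matrix.mul_neg,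
    Matrix.mul_assoc Cᵀ, ← Matrix.mul_assoc R⁻¹, nonsing_inv_mul _ hR, Matrix.one_mul,
    add_neg_cancel]

theorem kalmanUpdate_stationary (hP : IsUnit P.det) (hR : IsUnit R.det)
    (hS : IsUnit (C * P * Cᵀ + R).det) (xhat : n → α) (y : m → α) :
    P⁻¹ *ᵥ (kalmanUpdate P C R xhat y - xhat)
      + Cᵀ *ᵥ (R⁻¹ *ᵥ (C *ᵥ kalmanUpdate P C R xhat y - y)) = 0 := by
  have hgain : kalmanUpdate P C R xhat y - xhat = kalmanGain P C R *ᵥ (y - C *ᵥ xhat) :=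
    add_sub_cancel_left _ _
  have hresidual : C *ᵥ kalmanUpdate P C R xhat y - y
      = (C * kalmanGain P C R - 1) *ᵥ (y - C *ᵥ xhat) := by
    rw [kalmanUpdate, mulVec_add, mulVec_mulVec, sub_mulVec, one_mulVec]
    abel
  rw [hgain, hresidual, mulVec_mulVec, mulVec_mulVec, mulVec_mulVec, ← add_mulVec,
    inv_mul_kalmanGain_add_eq_zero hP hR hS, zero_mulVec]

end Kalman

theorem kalman_update_is_map_minimizer_general (n m : ℕ)
    (P : Matrix (Fin n) (Fin n) ℝ) (hP : P.PosDef)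
    (xhat : Fin n → ℝ) (c : Fin m → (Fin n → ℝ)) (y : Fin m → ℝ)
    (r : Fin m → ℝ) (hr : ∀ i, 0 < r i)
    (C : Matrix (Fin m) (Fin n) ℝ) (hC : C = Matrix.of c)
    (R : Matrix (Fin m) (Fin m) ℝ) (hR : R = Matrix.diagonal r)
    (K : Matrix (Fin n) (Fin m) ℝ) (hK : K = P * Cᵀ * (C * P * Cᵀ + R)⁻¹)
    (Q : (Fin n → ℝ) → ℝ)
    (hQ : Q = fun x => (x - xhat) ⬝ᵥ (P⁻¹ *ᵥ (x - xhat))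
        + ∑ i, (c i ⬝ᵥ x - y i) ^ 2 / r i)
    (xstar : Fin n → ℝ) (hxstar : xstar = xhat + K *ᵥ (y - C *ᵥ xhat)) :
    ∀ x : Fin n → ℝ, x ≠ xstar → Q xstar < Q x := by
  have hRpd : R.PosDef := hR ▸ PosDef.diagonal hr
  have hSpd : (C * P * Cᵀ + R).PosDef := by
    simpa only [conjTranspose_eq_transpose_of_trivial] using
      PosDef.posSemidef_add (hP.posSemidef.mul_mul_conjTranspose_same C) hRpd
  have hstat := kalmanUpdate_stationary ((isUnit_iff_isUnit_det _).mp hP.isUnit)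
    ((isUnit_iff_isUnit_det _).mp hRpd.isUnit) ((isUnit_iff_isUnit_det _).mp hSpd.isUnit) xhat y
  have hQ_quadratic : Q = fun x =>
      (x - xhat) ⬝ᵥ P⁻¹ *ᵥ (x - xhat) + (C *ᵥ x - y) ⬝ᵥ R⁻¹ *ᵥ (C *ᵥ x - y) := by
    rw [hQ, hR, inv_diagonal_of_ne_zero fun i => (hr i).ne', hC]
    simp only [dotProduct_diagonal_inv_mulVec]
    rfl
  intro x hx
  subst hxstar hK
  rw [hQ_quadratic]
  exact quadratic_objective_lt_of_stationary hP.inv hRpd.inv.posSemidef C xhat y hstat hx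

theorem kalman_update_is_map_minimizer (n m : ℕ)
    (P : Matrix (Fin n) (Fin n) ℝ) (hP : P.PosDef) (hPsymm : P.IsSymm)
    (xhat : Fin n → ℝ) (c : Fin m → (Fin n → ℝ)) (y : Fin m → ℝ)
    (r : Fin m → ℝ) (hr : ∀ i, 0 < r i)
    (C : Matrix (Fin m) (Fin n) ℝ) (hC : C = Matrix.of c)
    (R : Matrix (Fin m) (Fin m) ℝ) (hR : R = Matrix.diagonal r)
    (K : Matrix (Fin n) (Fin m) ℝ) (hK : K = P * Cᵀ * (C * P * Cᵀ + R)⁻¹)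
    (Q : (Fin n → ℝ) → ℝ)
    (hQ : Q = fun x => (x - xhat) ⬝ᵥ (P⁻¹ *ᵥ (x - xhat))
        + ∑ i, (c i ⬝ᵥ x - y i) ^ 2 / r i)
    (xstar : Fin n → ℝ) (hxstar : xstar = xhat + K *ᵥ (y - C *ᵥ xhat)) :
    ∀ x : Fin n → ℝ, x ≠ xstar → Q xstar < Q x :=
  kalman_update_is_map_minimizer_general n m P hP xhat c y r hr C hC R hR K hK Q hQ xstar hxstar
end
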